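/- arXiv:2601.03094 — 4 statements merged into one kernel-verified Lean document; each statement's English description precedes it below -/
import Mathlib

section
/- Let V be a nonzero real vector space carrying a quaternionic triple (J₁, J₂, J₃) and let γ₁, γ₂, γ₃ : V → ℝ be linear functionals. Define the ℝ-bilinear map φ : V × V → V by φ(X,Y) := γ₁(X)·J₁(Y) + γ₂(X)·J₂(Y) + γ₃(X)·J₃(Y). Then for every cyclic permutation (a,b,c) of (1,2,3) and all X, Y ∈ V, π_{J_a}(φ)(X,Y) = −(1/2)(ψ_a(X)·J_b(Y) + ψ_a(J_a X)·J_c(Y)), where ψ_a : V → ℝ is the linear functional ψ_a := γ_c∘J_a − γ_b. -/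
/-!
`π_J` is additive in `φ`. On a term `γ ⊗ A`, i.e. `(X, Y) ↦ γ X • A Y`, it vanishes when
`A` commutes with `J`, and it equals `½ (γ ⊗ A + (γ ∘ J) ⊗ JA)` when `A` anticommutes
with `J`. For `J = J_a` the summand `γ_a ⊗ J_a` therefore drops out, while `γ_b ⊗ J_b`
and `γ_c ⊗ J_c` contribute `½ (γ_b ⊗ J_b + (γ_b ∘ J_a) ⊗ J_c)` and
`½ (γ_c ⊗ J_c − (γ_c ∘ J_a) ⊗ J_b)`, which regroup into `−½ (ψ_a ⊗ J_b + (ψ_a ∘ J_a) ⊗ J_c)`.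
-/

/-- The projection `π_J(φ)(X,Y) := (1/4)(φ(X,Y) + J(φ(JX,Y)) + J(φ(X,JY)) − φ(JX,JY))`
associated with a complex structure `J` and a bilinear map `φ`. -/
noncomputable def piJ {V : Type*} [AddCommGroup V] [Module ℝ V]
    (J : Module.End ℝ V) (φ : V → V → V) (X Y : V) : V :=
  (1/4 : ℝ) • (φ X Y + J (φ (J X) Y) + J (φ X (J Y)) - φ (J X) (J Y))

section
variable {V : Type*} [AddCommGroup V] [Module ℝ V]

lemma piJ_add (J : Module.End ℝ V) (φ φ' : V → V → V) (X Y : V) :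
    piJ J (φ + φ') X Y = piJ J φ X Y + piJ J φ' X Y := by
  simp only [piJ, Pi.add_apply, map_add, ← smul_add]
  abel_nf

lemma piJ_smul_eq_zero_of_commute {J A : Module.End ℝ V} (hJ : J * J = -1)
    (hA : Commute J A) (γ : V → ℝ) (X Y : V) :
    piJ J (fun X Y => γ X • A Y) X Y = 0 := by
  have hJJ (v : V) : J (J v) = -v := by simpa using LinearMap.congr_fun hJ v
  have hJA (v : V) : J (A v) = A (J v) := LinearMap.congr_fun hA v
  simp only [piJ, map_smul, hJA, hJJ, map_neg]
  module

lemma piJ_smul_of_anticommute {J A B : Module.End ℝ V} (hJ : J * J = -1)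
    (hJA : J * A = B) (hAJ : A * J = -B) (γ : V → ℝ) (X Y : V) :
    piJ J (fun X Y => γ X • A Y) X Y = (1/2 : ℝ) • (γ X • A Y + γ (J X) • B Y) := by
  subst hJA
  have hJJ (v : V) : J (J v) = -v := by simpa using LinearMap.congr_fun hJ v
  have hAJ (v : V) : A (J v) = -J (A v) := by simpa using LinearMap.congr_fun hAJ v
  simp only [piJ, map_smul, hAJ, hJJ, map_neg, Module.End.mul_apply]
  module

theorem piJ_of_quaternionic_cyclic {Ja Jb Jc : Module.End ℝ V} (haa : Ja * Ja = -1)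
    (hab : Ja * Jb = Jc) (hba : Jb * Ja = -Jc) (hac : Ja * Jc = -Jb) (hca : Jc * Ja = Jb)
    (γa γb γc : V →ₗ[ℝ] ℝ) (φ : V → V → V)
    (hφ : ∀ X Y, φ X Y = γa X • Ja Y + γb X • Jb Y + γc X • Jc Y) (X Y : V) :
    piJ Ja φ X Y =
      -((1/2 : ℝ) • ((γc ∘ₗ Ja - γb) X • Jb Y + (γc ∘ₗ Ja - γb) (Ja X) • Jc Y)) := by
  have hφ_sum : φ = (fun X Y => γa X • Ja Y) + (fun X Y => γb X • Jb Y) +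
      (fun X Y => γc X • Jc Y) := funext₂ hφ
  have hJJ (v : V) : Ja (Ja v) = -v := by simpa using LinearMap.congr_fun haa v
  rw [hφ_sum, piJ_add, piJ_add, piJ_smul_eq_zero_of_commute haa (Commute.refl Ja),
    piJ_smul_of_anticommute haa hab hba, piJ_smul_of_anticommute haa hac (by rw [hca, neg_neg])]
  simp only [LinearMap.sub_apply, LinearMap.neg_apply, LinearMap.comp_apply, hJJ, map_neg]
  module

end

theorem stmt_1_general {V : Type*} [AddCommGroup V] [Module ℝ V]
    (J₁ J₂ J₃ : Module.End ℝ V)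
    (h11 : J₁ * J₁ = -1) (h22 : J₂ * J₂ = -1) (h33 : J₃ * J₃ = -1)
    (h12 : J₁ * J₂ = J₃) (h21 : J₂ * J₁ = -J₃)
    (h23 : J₂ * J₃ = J₁) (h32 : J₃ * J₂ = -J₁)
    (h31 : J₃ * J₁ = J₂) (h13 : J₁ * J₃ = -J₂)
    (γ₁ γ₂ γ₃ : V →ₗ[ℝ] ℝ)
    (φ : V → V → V)
    (hφ : ∀ X Y, φ X Y = γ₁ X • J₁ Y + γ₂ X • J₂ Y + γ₃ X • J₃ Y)
    (Ja Jb Jc : Module.End ℝ V) (γa γb γc : V →ₗ[ℝ] ℝ)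
    (hcyc : (Ja, Jb, Jc, γa, γb, γc) = (J₁, J₂, J₃, γ₁, γ₂, γ₃) ∨
      (Ja, Jb, Jc, γa, γb, γc) = (J₂, J₃, J₁, γ₂, γ₃, γ₁) ∨
      (Ja, Jb, Jc, γa, γb, γc) = (J₃, J₁, J₂, γ₃, γ₁, γ₂))
    (ψa : V →ₗ[ℝ] ℝ) (hψa : ψa = γc ∘ₗ Ja - γb) (X Y : V) :
    piJ Ja φ X Y = -((1/2 : ℝ) • (ψa X • Jb Y + ψa (Ja X) • Jc Y)) := by
  subst hψa
  rcases hcyc with h | h | h <;> simp only [Prod.mk.injEq] at h <;>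
    obtain ⟨rfl, rfl, rfl, rfl, rfl, rfl⟩ := h
  · exact piJ_of_quaternionic_cyclic h11 h12 h21 h13 h31 γa γb γc φ hφ X Y
  · exact piJ_of_quaternionic_cyclic h22 h23 h32 h21 h12 γa γb γc φ
      (fun X Y => by rw [hφ]; abel) X Y
  · exact piJ_of_quaternionic_cyclic h33 h31 h13 h32 h23 γa γb γc φ
      (fun X Y => by rw [hφ]; abel) X Y

theorem stmt_1 {V : Type*} [AddCommGroup V] [Module ℝ V] [Nontrivial V]
    (J₁ J₂ J₃ : Module.End ℝ V)
    (h11 : J₁ * J₁ = -1) (h22 : J₂ * J₂ = -1) (h33 : J₃ * J₃ = -1)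
    (h12 : J₁ * J₂ = J₃) (h21 : J₂ * J₁ = -J₃)
    (h23 : J₂ * J₃ = J₁) (h32 : J₃ * J₂ = -J₁)
    (h31 : J₃ * J₁ = J₂) (h13 : J₁ * J₃ = -J₂)
    (γ₁ γ₂ γ₃ : V →ₗ[ℝ] ℝ)
    (φ : V → V → V)
    (hφ : ∀ X Y, φ X Y = γ₁ X • J₁ Y + γ₂ X • J₂ Y + γ₃ X • J₃ Y)
    (Ja Jb Jc : Module.End ℝ V) (γa γb γc : V →ₗ[ℝ] ℝ)
    (hcyc : (Ja, Jb, Jc, γa, γb, γc) = (J₁, J₂, J₃, γ₁, γ₂, γ₃) ∨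
      (Ja, Jb, Jc, γa, γb, γc) = (J₂, J₃, J₁, γ₂, γ₃, γ₁) ∨
      (Ja, Jb, Jc, γa, γb, γc) = (J₃, J₁, J₂, γ₃, γ₁, γ₂))
    (ψa : V →ₗ[ℝ] ℝ) (hψa : ψa = γc ∘ₗ Ja - γb) (X Y : V) :
    piJ Ja φ X Y = -((1/2 : ℝ) • (ψa X • Jb Y + ψa (Ja X) • Jc Y)) :=
  stmt_1_general J₁ J₂ J₃ h11 h22 h33 h12 h21 h23 h32 h31 h13 γ₁ γ₂ γ₃ φ hφ Ja Jb Jc γa γb γc hcyc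
    ψa hψa X Y
end

section
/- Let V be a real vector space carrying a quaternionic triple (J₁, J₂, J₃), let (a,b,c) be a cyclic permutation of (1,2,3), let W ⊆ V be a subspace with J_a(W) = W and with dim W ≥ 3 (finite rank at least 3), and let ψ : V → ℝ be a linear functional. Then the identity ψ(X)·J_b(Y) + ψ(J_a X)·J_c(Y) − ψ(Y)·J_b(X) − ψ(J_a Y)·J_c(X) = 0 holds for all X, Y ∈ W if and only if ψ(X) = 0 for all X ∈ W. -/
/-!
Write the identity as `Jb (ψ X • Y - ψ Y • X) + Jc (ψ (Ja X) • Y - ψ (Ja Y) • X) = 0` and apply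
`Jb`: since `Jb² = -1` and `Jb Jc = Ja`, it becomes `ψ X • Y - ψ Y • X = Ja (ψ (Ja X) • Y - ψ (Ja Y) • X)`.
If `ψ X ≠ 0` for some `X ∈ W`, combining this relation for `Y` and for `Ja Y` (with weights `ψ X` and
`ψ (Ja X)`) eliminates `Ja Y` and shows that every `Y ∈ W` lies in `span {X, Ja X}`, so `dim W ≤ 2`.
-/

open Submodule

section

variable {V : Type*} [AddCommGroup V] [Module ℝ V]

theorem cyclic_quaternionic_relations {J₁ J₂ J₃ Ja Jb Jc : Module.End ℝ V}
    (h11 : J₁ * J₁ = -1) (h22 : J₂ * J₂ = -1) (h33 : J₃ * J₃ = -1)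
    (h12 : J₁ * J₂ = J₃) (h23 : J₂ * J₃ = J₁) (h31 : J₃ * J₁ = J₂)
    (hcyc : (Ja, Jb, Jc) = (J₁, J₂, J₃) ∨ (Ja, Jb, Jc) = (J₂, J₃, J₁) ∨
      (Ja, Jb, Jc) = (J₃, J₁, J₂)) :
    Ja * Ja = -1 ∧ Jb * Jb = -1 ∧ Jb * Jc = Ja := by
  rcases hcyc with h | h | h <;> simp only [Prod.mk.injEq] at h <;>
    obtain ⟨rfl, rfl, rfl⟩ := h <;> exact ⟨‹_›, ‹_›, ‹_›⟩

theorem smul_sub_smul_eq_of_identity {Ja Jb Jc : Module.End ℝ V}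
    (hb : Jb * Jb = -1) (hbc : Jb * Jc = Ja) (ψ : V →ₗ[ℝ] ℝ) {X Y : V}
    (h : ψ X • Jb Y + ψ (Ja X) • Jc Y - ψ Y • Jb X - ψ (Ja Y) • Jc X = 0) :
    ψ X • Y - ψ Y • X = Ja (ψ (Ja X) • Y - ψ (Ja Y) • X) := by
  have hb' : ∀ v, Jb (Jb v) = -v := fun v => by
    simpa using LinearMap.congr_fun hb v
  have hbc' : ∀ v, Jb (Jc v) = Ja v := fun v => LinearMap.congr_fun hbc v
  have h' := congrArg Jb h
  simp only [map_add, map_sub, map_smul, map_zero, hb', hbc'] at h'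
  rw [map_sub, map_smul, map_smul]
  linear_combination (norm := module) -h'

theorem mem_span_pair_of_smul_sub_smul_eq {J : Module.End ℝ V} (hJ : J * J = -1)
    (ψ : V →ₗ[ℝ] ℝ) {X Y : V} (hX : ψ X ≠ 0)
    (hY : ψ X • Y - ψ Y • X = J (ψ (J X) • Y - ψ (J Y) • X))
    (hJY : ψ X • J Y - ψ (J Y) • X = J (ψ (J X) • J Y - ψ (J (J Y)) • X)) :
    Y ∈ span ℝ {X, J X} := by
  have hJJ : ∀ v, J (J v) = -v := fun v => by simpa using LinearMap.congr_fun hJ v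
  simp only [map_sub, map_smul, hJJ, map_neg] at hY hJY
  have hcomb : (ψ X * ψ X + ψ (J X) * ψ (J X)) • Y =
      (ψ (J X) * ψ (J Y) + ψ X * ψ Y) • X + (ψ (J X) * ψ Y - ψ X * ψ (J Y)) • J X := by
    linear_combination (norm := module) ψ X • hY + ψ (J X) • hJY
  have hpos : ψ X * ψ X + ψ (J X) * ψ (J X) ≠ 0 :=
    (add_pos_of_pos_of_nonneg (mul_self_pos.2 hX) (mul_self_nonneg _)).ne'
  rw [← inv_smul_smul₀ hpos Y, hcomb]
  refine smul_mem _ _ (add_mem (smul_mem _ _ (subset_span ?_)) (smul_mem _ _ (subset_span ?_)))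
    <;> simp

theorem rank_le_two_of_forall_smul_sub_smul_eq {J : Module.End ℝ V} (hJ : J * J = -1)
    {W : Submodule ℝ V} (hW : ∀ x ∈ W, J x ∈ W) (ψ : V →ₗ[ℝ] ℝ) {X : V} (hX : ψ X ≠ 0)
    (H : ∀ Y ∈ W, ψ X • Y - ψ Y • X = J (ψ (J X) • Y - ψ (J Y) • X)) :
    Module.rank ℝ W ≤ 2 := by
  have hle : W ≤ span ℝ {X, J X} := fun Y hY =>
    mem_span_pair_of_smul_sub_smul_eq hJ ψ hX (H Y hY) (H (J Y) (hW Y hY))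
  classical
  calc Module.rank ℝ W ≤ Module.rank ℝ (span ℝ {X, J X}) := rank_mono hle
    _ ≤ 2 := by
      have := rank_span_finset_le (R := ℝ) ({X, J X} : Finset V)
      rw [Finset.coe_pair] at this
      exact this.trans (by exact_mod_cast Finset.card_le_two)

end

theorem stmt_4_general {V : Type*} [AddCommGroup V] [Module ℝ V]
    (J₁ J₂ J₃ : Module.End ℝ V)
    (h11 : J₁ * J₁ = -1) (h22 : J₂ * J₂ = -1) (h33 : J₃ * J₃ = -1)
    (h12 : J₁ * J₂ = J₃)
    (h23 : J₂ * J₃ = J₁)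
    (h31 : J₃ * J₁ = J₂)
    (Ja Jb Jc : Module.End ℝ V)
    (hcyc : (Ja, Jb, Jc) = (J₁, J₂, J₃) ∨ (Ja, Jb, Jc) = (J₂, J₃, J₁) ∨
      (Ja, Jb, Jc) = (J₃, J₁, J₂))
    (W : Submodule ℝ V) (hW : W.map Ja = W) (hdim : 3 ≤ Module.rank ℝ W)
    (ψ : V →ₗ[ℝ] ℝ) :
    (∀ X ∈ W, ∀ Y ∈ W,
        ψ X • Jb Y + ψ (Ja X) • Jc Y - ψ Y • Jb X - ψ (Ja Y) • Jc X = 0) ↔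
      (∀ X ∈ W, ψ X = 0) := by
  obtain ⟨ha, hb, hbc⟩ := cyclic_quaternionic_relations h11 h22 h33 h12 h23 h31 hcyc
  have haW : ∀ x ∈ W, Ja x ∈ W := fun x hx => hW ▸ mem_map_of_mem hx
  constructor
  · intro H X hX
    by_contra hne
    have hrank := rank_le_two_of_forall_smul_sub_smul_eq ha haW ψ hne fun Y hY =>
      smul_sub_smul_eq_of_identity hb hbc ψ (H X hX Y hY)
    exact absurd (hdim.trans hrank) (by norm_num)
  · intro H X hX Y hY
    simp [H X hX, H Y hY, H _ (haW X hX), H _ (haW Y hY)]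

theorem stmt_4 {V : Type*} [AddCommGroup V] [Module ℝ V]
    (J₁ J₂ J₃ : Module.End ℝ V)
    (h11 : J₁ * J₁ = -1) (h22 : J₂ * J₂ = -1) (h33 : J₃ * J₃ = -1)
    (h12 : J₁ * J₂ = J₃) (h21 : J₂ * J₁ = -J₃)
    (h23 : J₂ * J₃ = J₁) (h32 : J₃ * J₂ = -J₁)
    (h31 : J₃ * J₁ = J₂) (h13 : J₁ * J₃ = -J₂)
    (Ja Jb Jc : Module.End ℝ V)
    (hcyc : (Ja, Jb, Jc) = (J₁, J₂, J₃) ∨ (Ja, Jb, Jc) = (J₂, J₃, J₁) ∨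
      (Ja, Jb, Jc) = (J₃, J₁, J₂))
    (W : Submodule ℝ V) (hW : W.map Ja = W) (hdim : 3 ≤ Module.rank ℝ W)
    (ψ : V →ₗ[ℝ] ℝ) :
    (∀ X ∈ W, ∀ Y ∈ W,
        ψ X • Jb Y + ψ (Ja X) • Jc Y - ψ Y • Jb X - ψ (Ja Y) • Jc X = 0) ↔
      (∀ X ∈ W, ψ X = 0) :=
  stmt_4_general J₁ J₂ J₃ h11 h22 h33 h12 h23 h31 Ja Jb Jc hcyc W hW hdim ψ
end

section
/- Let V be a real vector space, let J be a complex structure on V, let W ⊆ V be a subspace with J(W) = W, and let ψ : V → ℝ be a linear functional whose restriction to W is not identically zero. For X, Y ∈ V set V^ψ_{X,Y} := ψ(X)·Y − ψ(JX)·J(Y) − ψ(Y)·X + ψ(JY)·J(X). Suppose S ⊆ V is a subspace such that V^ψ_{X,Y} ∈ S for all X, Y ∈ W. Then every Y ∈ W with ψ(Y) = 0 and ψ(JY) = 0 belongs to S; that is, W ∩ ker ψ ∩ ker(ψ∘J) ⊆ S. -/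
/-!
For `Y` in `W ∩ ker ψ ∩ ker (ψ ∘ J)` and any `X`, the two brackets `V^ψ_{X,Y}` and `V^ψ_{X,JY}`
reduce to `ψ(X)·Y − ψ(JX)·JY` and `ψ(X)·JY + ψ(JX)·Y`, so
`ψ(X)·V^ψ_{X,Y} + ψ(JX)·V^ψ_{X,JY} = (ψ(X)² + ψ(JX)²)·Y`.
Since `JY ∈ W`, choosing `X ∈ W` with `ψ(X) ≠ 0` makes the coefficient a nonzero real, so `Y ∈ S`.
-/

section

variable {R V : Type*} [CommRing R] [AddCommGroup V] [Module R V]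

/-- The bracket `V^ψ_{X,Y}` of the statement. -/
def psiBracket (ψ : V →ₗ[R] R) (J : Module.End R V) (X Y : V) : V :=
  ψ X • Y - ψ (J X) • J Y - ψ Y • X + ψ (J Y) • J X

theorem Module.End.apply_apply_of_mul_self_eq_neg_one {J : Module.End R V} (hJ : J * J = -1)
    (v : V) : J (J v) = -v := by
  simpa using LinearMap.congr_fun hJ v

theorem sq_add_sq_smul_eq_psiBracket (ψ : V →ₗ[R] R) {J : Module.End R V} (hJ : J * J = -1)
    (X : V) {Y : V} (hY : ψ Y = 0) (hJY : ψ (J Y) = 0) :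
    (ψ X ^ 2 + ψ (J X) ^ 2) • Y =
      ψ X • psiBracket ψ J X Y + ψ (J X) • psiBracket ψ J X (J Y) := by
  simp only [psiBracket, J.apply_apply_of_mul_self_eq_neg_one hJ, map_neg, hY, hJY, neg_zero,
    smul_neg]
  module

end

theorem stmt_9 {V : Type*} [AddCommGroup V] [Module ℝ V]
    (J : Module.End ℝ V) (hJ : J * J = -1)
    (W : Submodule ℝ V) (hW : W.map J = W)
    (ψ : V →ₗ[ℝ] ℝ) (hψW : ∃ X ∈ W, ψ X ≠ 0)
    (Vψ : V → V → V)
    (hVψ : ∀ X Y, Vψ X Y = ψ X • Y - ψ (J X) • J Y - ψ Y • X + ψ (J Y) • J X)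
    (S : Submodule ℝ V)
    (hS : ∀ X ∈ W, ∀ Y ∈ W, Vψ X Y ∈ S) :
    ∀ Y ∈ W, ψ Y = 0 → ψ (J Y) = 0 → Y ∈ S := by
  obtain ⟨X, hXW, hX⟩ := hψW
  intro Y hYW hY hJY
  have hVψ_eq : Vψ = psiBracket ψ J := funext₂ hVψ
  have hJYW : J Y ∈ W := hW ▸ Submodule.mem_map_of_mem hYW
  have hcoeff : ψ X ^ 2 + ψ (J X) ^ 2 ≠ 0 := by positivity
  rw [← Submodule.smul_mem_iff S hcoeff, sq_add_sq_smul_eq_psiBracket ψ hJ X hY hJY, ← hVψ_eq]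
  exact S.add_mem (S.smul_mem _ (hS X hXW Y hYW)) (S.smul_mem _ (hS X hXW (J Y) hJYW))
end

section
/- Let V be a real vector space, let ω be a nondegenerate alternating bilinear form on V, and let (J₁, J₂, J₃) be a quaternionic triple on V such that ω(J_a X, J_a Y) = ω(X, Y) for all X, Y ∈ V and a = 1, 2, 3. Let W ⊆ V be a subspace with J₁(W) = W, and let γ₂, γ₃ : V → ℝ be linear functionals. Then the following two conditions are equivalent: (A) for all X, Y ∈ W, the vector γ₃(X)·J₂(Y) − γ₂(X)·J₃(Y) lies in the ω-orthogonal complement W^{⊥ω}; (B) either γ₂ and γ₃ both vanish identically on W, or J₂(W) ⊆ W^{⊥ω}. -/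
/-!
Since `J₁` preserves `ω` and `J₁² = -1`, it is `ω`-skew, so `ω(J₃Y, Z) = ω(J₁J₂Y, Z) = -ω(J₂Y, J₁Z)`.
Hence, writing `a(Y, Z) = ω(J₂Y, Z)`, condition (A) says `γ₃(X) a(Y, Z) + γ₂(X) a(Y, J₁Z) = 0` for
`X, Y, Z ∈ W`. If `a(Y₀, Z₀) ≠ 0` for some `Y₀, Z₀ ∈ W`, then testing against `Z₀` and `J₁Z₀ ∈ W`
gives a linear system for `(γ₃(X), γ₂(X))` with determinant `a(Y₀, Z₀)² + a(Y₀, J₁Z₀)² > 0`,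
so `γ₂` and `γ₃` vanish on `W`; otherwise `J₂(W) ⊆ W^{⊥ω}`.
-/

/-- The `ω`-orthogonal complement `W^{⊥ω} = {u ∈ V : ω(u, w) = 0 for all w ∈ W}`
of a subspace `W` with respect to a bilinear form `ω`. -/
def omegaPerp {V : Type*} [AddCommGroup V] [Module ℝ V]
    (ω : V →ₗ[ℝ] V →ₗ[ℝ] ℝ) (W : Submodule ℝ V) : Submodule ℝ V where
  carrier := {u | ∀ w ∈ W, ω u w = 0}
  add_mem' := by
    intro a b ha hb w hw
    simp [ha w hw, hb w hw]
  zero_mem' := by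
    intro w hw
    simp
  smul_mem' := by
    intro c a ha w hw
    simp [ha w hw]

theorem LinearMap.isAdjointPair_neg_of_mul_self_eq_neg_one {R M N : Type*} [CommRing R]
    [AddCommGroup M] [Module R M] [AddCommGroup N] [Module R N]
    {B : M →ₗ[R] M →ₗ[R] N} {J : Module.End R M} (hJJ : J * J = -1)
    (hB : ∀ x y, B (J x) (J y) = B x y) :
    LinearMap.IsAdjointPair B B J (-J) := by
  intro x y
  have hy : J (-J y) = y := by
    simpa [Module.End.mul_apply] using LinearMap.congr_fun hJJ (-y)
  rw [← hB x, Pi.neg_apply, hy]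

theorem eq_zero_and_eq_zero_of_mul_add_mul_eq_zero {K : Type*} [Field K] [LinearOrder K]
    [IsStrictOrderedRing K] {c s p q : K} (hp : p ≠ 0)
    (h₁ : c * p + s * q = 0) (h₂ : c * q - s * p = 0) : c = 0 ∧ s = 0 := by
  have h : (c * c + s * s) * p = 0 := by linear_combination c * h₁ - s * h₂
  exact mul_self_add_mul_self_eq_zero.mp ((mul_eq_zero.mp h).resolve_right hp)

theorem smul_sub_smul_mem_omegaPerp_iff {V : Type*} [AddCommGroup V] [Module ℝ V]
    {ω : V →ₗ[ℝ] V →ₗ[ℝ] ℝ} {W : Submodule ℝ V} {a b : ℝ} {u v : V} :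
    a • u - b • v ∈ omegaPerp ω W ↔ ∀ z ∈ W, a * ω u z - b * ω v z = 0 := by
  show (∀ z ∈ W, ω (a • u - b • v) z = 0) ↔ _
  simp only [map_sub, map_smul, LinearMap.sub_apply, LinearMap.smul_apply, smul_eq_mul]

theorem stmt_12_general {V : Type*} [AddCommGroup V] [Module ℝ V]
    (ω : V →ₗ[ℝ] V →ₗ[ℝ] ℝ)
    (J₁ J₂ J₃ : Module.End ℝ V)
    (h11 : J₁ * J₁ = -1)
    (h12 : J₁ * J₂ = J₃)
    (hinv1 : ∀ X Y, ω (J₁ X) (J₁ Y) = ω X Y)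
    (W : Submodule ℝ V) (hW : W.map J₁ = W)
    (γ₂ γ₃ : V →ₗ[ℝ] ℝ) :
    (∀ X ∈ W, ∀ Y ∈ W, γ₃ X • J₂ Y - γ₂ X • J₃ Y ∈ omegaPerp ω W) ↔
      (((∀ X ∈ W, γ₂ X = 0) ∧ (∀ X ∈ W, γ₃ X = 0)) ∨
        W.map J₂ ≤ omegaPerp ω W) := by
  have hJ₃ : ∀ Y Z, ω (J₃ Y) Z = -ω (J₂ Y) (J₁ Z) := fun Y Z => by
    rw [← h12, Module.End.mul_apply,
      LinearMap.isAdjointPair_neg_of_mul_self_eq_neg_one h11 hinv1, Pi.neg_apply, map_neg]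
  have hJ₁W : ∀ Z ∈ W, J₁ Z ∈ W := fun Z hZ => hW ▸ Submodule.mem_map_of_mem hZ
  have hcondA : ∀ X Y, γ₃ X • J₂ Y - γ₂ X • J₃ Y ∈ omegaPerp ω W ↔
      ∀ Z ∈ W, γ₃ X * ω (J₂ Y) Z + γ₂ X * ω (J₂ Y) (J₁ Z) = 0 := fun X Y => by
    simp only [smul_sub_smul_mem_omegaPerp_iff, hJ₃, mul_neg, sub_neg_eq_add]
  have hcondB : W.map J₂ ≤ omegaPerp ω W ↔ ∀ Y ∈ W, ∀ Z ∈ W, ω (J₂ Y) Z = 0 := by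
    simp only [Submodule.map_le_iff_le_comap]; rfl
  simp only [hcondA, hcondB]
  constructor
  · intro h
    refine or_iff_not_imp_right.mpr fun hne => ?_
    push Not at hne
    obtain ⟨Y₀, hY₀, Z₀, hZ₀, hp⟩ := hne
    have hJ₁J₁ : J₁ (J₁ Z₀) = -Z₀ := by simpa using LinearMap.congr_fun h11 Z₀
    have hγ : ∀ X ∈ W, γ₃ X = 0 ∧ γ₂ X = 0 := fun X hX =>
      eq_zero_and_eq_zero_of_mul_add_mul_eq_zero hp (h X hX Y₀ hY₀ Z₀ hZ₀)
        (by simpa [hJ₁J₁, sub_eq_add_neg] using h X hX Y₀ hY₀ (J₁ Z₀) (hJ₁W Z₀ hZ₀))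
    exact ⟨fun X hX => (hγ X hX).2, fun X hX => (hγ X hX).1⟩
  · rintro (⟨h₂, h₃⟩ | h) X hX Y hY Z hZ
    · simp [h₂ X hX, h₃ X hX]
    · simp [h Y hY Z hZ, h Y hY (J₁ Z) (hJ₁W Z hZ)]

theorem stmt_12 {V : Type*} [AddCommGroup V] [Module ℝ V]
    (ω : V →ₗ[ℝ] V →ₗ[ℝ] ℝ)
    (halt : ∀ X, ω X X = 0)
    (hnd : ∀ u, (∀ v, ω u v = 0) → u = 0)
    (J₁ J₂ J₃ : Module.End ℝ V)
    (h11 : J₁ * J₁ = -1) (h22 : J₂ * J₂ = -1) (h33 : J₃ * J₃ = -1)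
    (h12 : J₁ * J₂ = J₃) (h21 : J₂ * J₁ = -J₃)
    (h23 : J₂ * J₃ = J₁) (h32 : J₃ * J₂ = -J₁)
    (h31 : J₃ * J₁ = J₂) (h13 : J₁ * J₃ = -J₂)
    (hinv1 : ∀ X Y, ω (J₁ X) (J₁ Y) = ω X Y)
    (hinv2 : ∀ X Y, ω (J₂ X) (J₂ Y) = ω X Y)
    (hinv3 : ∀ X Y, ω (J₃ X) (J₃ Y) = ω X Y)
    (W : Submodule ℝ V) (hW : W.map J₁ = W)
    (γ₂ γ₃ : V →ₗ[ℝ] ℝ) :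
    (∀ X ∈ W, ∀ Y ∈ W, γ₃ X • J₂ Y - γ₂ X • J₃ Y ∈ omegaPerp ω W) ↔
      (((∀ X ∈ W, γ₂ X = 0) ∧ (∀ X ∈ W, γ₃ X = 0)) ∨
        W.map J₂ ≤ omegaPerp ω W) :=
  stmt_12_general ω J₁ J₂ J₃ h11 h12 hinv1 W hW γ₂ γ₃
end
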